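/- The tetrahedron E^2_{(5,1)} = conv{(1,0,0),(0,0,1),(3,7,1),(-2,-3,-1)} contains exactly five lattice points (its four vertices and the origin); the four tetrahedra spanned by the origin together with three of its vertices have normalized volumes 3, 4, 5 and 7; consequently E^2_{(5,1)} is lattice-spanning but contains no unimodular tetrahedron with vertices among its lattice points. -/

import Mathlib

/-- embedding of integer points into `ℝ³` -/
noncomputable def rr (v : Fin 3 → ℤ) : Fin 3 → ℝ := fun i => (v i : ℝ)

/-- The subgroup of `ℤ³` generated by all differences of lattice points;
`P` is lattice-spanning if it is all of `ℤ³`. -/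
def diffLat (A : Set (Fin 3 → ℤ)) : AddSubgroup (Fin 3 → ℤ) :=
  AddSubgroup.closure {v | ∃ x ∈ A, ∃ y ∈ A, v = x - y}

/-- Normalized volume of the tetrahedron with vertices `f 0, f 1, f 2, f 3`. -/
def normVol (f : Fin 4 → (Fin 3 → ℤ)) : ℕ :=
  (Matrix.det (Matrix.of fun i j : Fin 3 => (f i.succ - f 0) j)).natAbs

def u1 : Fin 3 → ℤ := ![1, 0, 0]
def u2 : Fin 3 → ℤ := ![0, 0, 1]
def u3 : Fin 3 → ℤ := ![3, 7, 1]
def u4 : Fin 3 → ℤ := ![-2, -3, -1]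

/-- The tetrahedron `E²_{(5,1)}`. -/
noncomputable def E51 : Set (Fin 3 → ℝ) :=
  convexHull ℝ {rr u1, rr u2, rr u3, rr u4}

/-- Its lattice points. -/
def L51 : Set (Fin 3 → ℤ) := {v | rr v ∈ E51}

/-! The lattice points of `E51` satisfy its four facet inequalities, and a bounded enumeration of
their integer solutions leaves only the vertices and the origin. Differences with the origin give
`e₁ = u1`, `e₂ = u1 + u2 + u3 + 2 • u4` and `e₃ = u2`, so `E51` is lattice-spanning. A tetrahedron on
four of the five lattice points is degenerate, one of the four of volumes 3, 4, 5, 7, or `E51`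
itself, of volume 19; so none is unimodular. -/

open Matrix

theorem dotProduct_le_of_mem_convexHull {ι : Type*} [Fintype ι] (a : ι → ℝ) {s : Set (ι → ℝ)}
    {C : ℝ} (hs : ∀ x ∈ s, a ⬝ᵥ x ≤ C) {x : ι → ℝ} (hx : x ∈ convexHull ℝ s) : a ⬝ᵥ x ≤ C :=
  convexHull_min hs (convex_halfSpace_le (dotProductBilin ℝ ℝ a).isLinear C) hx

theorem AddSubgroup.eq_top_of_forall_single_one_mem {ι : Type*} [Fintype ι] [DecidableEq ι]
    {H : AddSubgroup (ι → ℤ)} (h : ∀ i, Pi.single i 1 ∈ H) : H = ⊤ :=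
  (AddSubgroup.eq_top_iff' H).2 fun x => by
    rw [← Finset.univ_sum_single x]
    refine sum_mem fun i _ => ?_
    simpa [← Pi.single_smul'] using zsmul_mem (h i) (x i)

theorem subset_diffLat_of_zero_mem {A : Set (Fin 3 → ℤ)} (h0 : 0 ∈ A) : A ⊆ diffLat A :=
  fun x hx => AddSubgroup.subset_closure ⟨x, hx, 0, h0, (sub_zero x).symm⟩

def vertices51 : Fin 4 → Fin 3 → ℤ := ![u1, u2, u3, u4]

def points51 : Fin 5 → Fin 3 → ℤ := ![u1, u2, u3, u4, 0]

/-- The facet opposite `vertices51 i` is `{x | facetNormal51 i ⬝ᵥ x = facetBound51 i}`. -/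
def facetNormal51 : Fin 4 → Fin 3 → ℤ := ![![-14, 6, 5], ![4, 1, -15], ![3, -4, 3], ![7, -3, 7]]

def facetBound51 : Fin 4 → ℤ := ![5, 4, 3, 7]

theorem facetNormal51_dotProduct_vertices51_le (i j : Fin 4) :
    facetNormal51 i ⬝ᵥ vertices51 j ≤ facetBound51 i := by
  revert i j; decide

theorem facetNormal51_dotProduct_le_of_mem_L51 {v : Fin 3 → ℤ} (hv : v ∈ L51) (i : Fin 4) :
    facetNormal51 i ⬝ᵥ v ≤ facetBound51 i := by
  have hrr (w : Fin 3 → ℤ) : rr w = Int.castRingHom ℝ ∘ w := rfl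
  have hvert (j : Fin 4) : rr (facetNormal51 i) ⬝ᵥ rr (vertices51 j) ≤ facetBound51 i := by
    rw [hrr, hrr, ← RingHom.map_dotProduct, eq_intCast]
    exact_mod_cast facetNormal51_dotProduct_vertices51_le i j
  have hverts : ∀ x ∈ ({rr u1, rr u2, rr u3, rr u4} : Set (Fin 3 → ℝ)),
      rr (facetNormal51 i) ⬝ᵥ x ≤ facetBound51 i := by
    rintro x (rfl | rfl | rfl | rfl)
    exacts [hvert 0, hvert 1, hvert 2, hvert 3]
  have := dotProduct_le_of_mem_convexHull _ hverts hv
  rwa [hrr, hrr, ← RingHom.map_dotProduct, eq_intCast, Int.cast_le] at this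

theorem mem_range_points51_of_facet_ineqs {v : Fin 3 → ℤ}
    (hv : ∀ i, facetNormal51 i ⬝ᵥ v ≤ facetBound51 i) : v ∈ Set.range points51 := by
  obtain ⟨x, y, z, rfl⟩ : ∃ x y z : ℤ, v = ![x, y, z] :=
    ⟨v 0, v 1, v 2, by ext i; fin_cases i <;> rfl⟩
  have h0 := hv 0
  have h1 := hv 1
  have h2 := hv 2
  have h3 := hv 3
  simp only [facetNormal51, facetBound51, cons_val_zero, cons_val_one, cons_val, dotProduct_cons,
    head_cons, tail_cons, dotProduct_of_isEmpty, add_zero] at h0 h1 h2 h3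
  obtain ⟨hx₁, hx₂⟩ : -2 ≤ x ∧ x ≤ 3 := by omega
  obtain ⟨hy₁, hy₂⟩ : -3 ≤ y ∧ y ≤ 7 := by omega
  obtain ⟨hz₁, hz₂⟩ : -1 ≤ z ∧ z ≤ 1 := by omega
  interval_cases x <;> interval_cases z <;> interval_cases y <;> first | omega | decide

/-- The barycentric weights of the origin are the volumes `5, 4, 3, 7` of the tetrahedra
spanned by the origin and the facet opposite each vertex, divided by their sum `19`. -/
theorem zero_mem_E51 : rr 0 ∈ E51 := by
  show rr 0 ∈ convexHull ℝ _
  have h := (convex_convexHull ℝ {rr u1, rr u2, rr u3, rr u4}).sum_mem (t := Finset.univ)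
    (w := ![5 / 19, 4 / 19, 3 / 19, 7 / 19]) (z := fun j => rr (vertices51 j))
    (fun j _ => by fin_cases j <;> norm_num) (by simp [Fin.sum_univ_four]; norm_num)
    (fun j _ => subset_convexHull ℝ _ (by fin_cases j <;> simp [vertices51]))
  convert h using 1
  ext k
  fin_cases k <;> simp [Fin.sum_univ_four, rr, vertices51, u1, u2, u3, u4] <;> norm_num

theorem L51_eq_range_points51 : L51 = Set.range points51 := by
  refine Set.Subset.antisymm (fun v hv => mem_range_points51_of_facet_ineqs
    (facetNormal51_dotProduct_le_of_mem_L51 hv)) ?_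
  rintro _ ⟨j, rfl⟩
  fin_cases j
  all_goals first
    | exact zero_mem_E51
    | exact subset_convexHull ℝ _ (by simp [points51])

theorem diffLat_L51_eq_top : diffLat L51 = ⊤ := by
  have hL (j : Fin 5) : points51 j ∈ diffLat L51 := by
    rw [L51_eq_range_points51]
    exact subset_diffLat_of_zero_mem (A := Set.range points51) ⟨4, rfl⟩ ⟨j, rfl⟩
  refine AddSubgroup.eq_top_of_forall_single_one_mem fun k => ?_
  fin_cases k
  · convert hL 0 using 1
    decide
  · convert add_mem (add_mem (add_mem (hL 0) (hL 1)) (hL 2)) (zsmul_mem (hL 3) 2) using 1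
    decide
  · convert hL 1 using 1
    decide

set_option maxRecDepth 8000 in
theorem normVol_points51_comp_ne_one (c : Fin 4 → Fin 5) : normVol (points51 ∘ c) ≠ 1 := by
  revert c
  decide

theorem not_exists_unimodular_L51 :
    ¬ ∃ f : Fin 4 → (Fin 3 → ℤ), (∀ i, f i ∈ L51) ∧ normVol f = 1 := by
  rintro ⟨f, hf, hvol⟩
  rw [L51_eq_range_points51] at hf
  obtain ⟨c, rfl⟩ := Set.range_subset_range_iff_exists_comp.1 (Set.range_subset_iff.2 hf)
  exact normVol_points51_comp_ne_one c hvol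

theorem stmt16 :
    -- exactly five lattice points: the four vertices and the origin
    L51 = {u1, u2, u3, u4, 0} ∧ L51.ncard = 5 ∧
    -- the four tetrahedra on the origin and three vertices have volumes 3, 4, 5, 7
    normVol ![0, u1, u2, u4] = 3 ∧
    normVol ![0, u2, u3, u4] = 5 ∧
    normVol ![0, u1, u3, u4] = 4 ∧
    normVol ![0, u1, u2, u3] = 7 ∧
    -- E²_{(5,1)} is lattice-spanning
    (diffLat L51).index = 1 ∧
    -- but contains no unimodular tetrahedron with vertices among its lattice points
    ¬ ∃ f : Fin 4 → (Fin 3 → ℤ), (∀ i, f i ∈ L51) ∧ normVol f = 1 := by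
  refine ⟨?_, ?_, by decide, by decide, by decide, by decide, ?_, not_exists_unimodular_L51⟩
  · simp only [L51_eq_range_points51, points51, range_cons, range_empty, Set.union_empty,
      Set.singleton_union]
  · rw [L51_eq_range_points51, Set.ncard_range_of_injective (by decide), Nat.card_fin]
  · rw [diffLat_L51_eq_top, AddSubgroup.index_top]
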